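/- arXiv:nlin/0507044 — 5 statements merged into one kernel-verified Lean document; each statement's English description precedes it below -/
import Mathlib

section
/- Let σ > 0 and m > 0. The functional V : ℓ²(ℤ^N) → ℝ defined by V(φ) = −½(Σ_{κ=1}^N ‖∇⁺_κ φ‖²_{ℓ²} + m‖φ‖²_{ℓ²}) + (1/(2σ+2)) Σ_{n∈ℤ^N} |φ_n|^{2σ+2} is continuously Fréchet differentiable on ℓ²(ℤ^N), and its derivative is given by ⟨V′(φ), ψ⟩ = −(Σ_{κ=1}^N Σ_{n∈ℤ^N} (∇⁺_κ φ)_n (∇⁺_κ ψ)_n + m Σ_{n∈ℤ^N} φ_n ψ_n) + Σ_{n∈ℤ^N} |φ_n|^{2σ} φ_n ψ_n for all φ, ψ ∈ ℓ²(ℤ^N). -/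
noncomputable section

open scoped ENNReal InnerProductSpace

/-- The lattice `ℤ^N`. -/
abbrev ZLat (N : ℕ) := Fin N → ℤ

/-- The space `ℓ²(ℤ^N)` of real square-summable sequences. -/
abbrev ellTwo (N : ℕ) := lp (fun _ : ZLat N => ℝ) 2

/-- The `κ`-th standard basis vector of `ℤ^N`. -/
def evec (N : ℕ) (κ : Fin N) : ZLat N := fun j => if j = κ then 1 else 0

lemma memℓp_shift {N : ℕ} (v : ZLat N) (φ : ellTwo N) :
    Memℓp (fun n => φ (n + v)) 2 := by
  have h2 : (0:ℝ) < (2 : ℝ≥0∞).toReal := by norm_num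
  rw [memℓp_gen_iff h2]
  have h := (memℓp_gen_iff h2).mp (lp.memℓp φ)
  exact ((Equiv.addRight v).summable_iff (f := fun n => ‖φ n‖ ^ (2:ℝ≥0∞).toReal)).2 h

/-- The shift operator `(S_v φ)_n = φ_{n+v}` on `ℓ²(ℤ^N)`. -/
def shiftOp {N : ℕ} (v : ZLat N) (φ : ellTwo N) : ellTwo N :=
  ⟨fun n => φ (n + v), memℓp_shift v φ⟩

/-- The forward difference operator `(∇⁺_κ φ)_n = φ_{n+e_κ} - φ_n`. -/
def fdiff {N : ℕ} (κ : Fin N) (φ : ellTwo N) : ellTwo N := shiftOp (evec N κ) φ - φ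

/-- The discrete Laplacian on `ℓ²(ℤ^N)`:
`(Δ_d φ)_n = Σ_κ (φ_{n+e_κ} + φ_{n-e_κ}) - 2N φ_n`. -/
def discLap {N : ℕ} (φ : ellTwo N) : ellTwo N :=
  (∑ κ : Fin N, (shiftOp (evec N κ) φ + shiftOp (-(evec N κ)) φ)) - ((2 * N : ℝ) • φ)

/-- The potential functional
`V(φ) = -½(Σ_κ ‖∇⁺_κ φ‖² + m‖φ‖²) + (1/(2σ+2)) Σ_n |φ_n|^{2σ+2}`. -/
def Vfun {N : ℕ} (σ m : ℝ) (φ : ellTwo N) : ℝ :=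
  -(1/2) * (∑ κ : Fin N, ‖fdiff κ φ‖ ^ 2 + m * ‖φ‖ ^ 2)
    + (1/(2*σ+2)) * ∑' n : ZLat N, |φ n| ^ (2*σ+2)

/-!
The quadratic part of `V` is a sum of squared norms of bounded operators: `∇⁺_κ` is a shift
minus the identity, and shifts are isometries of `ℓ²`. For the nonlinear part, `g(t) = |t|^(r+2)`
has derivative `(r+2)|t|^r t`, and `t ↦ |t|^r t` is Lipschitz on bounded sets. Hence
`|g(a+b) - g(a) - g'(a) b| ≤ C b²` uniformly for `|a| + |b| ≤ R`; since `‖φ‖_∞ ≤ ‖φ‖_{ℓ²}`, summing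
over the lattice bounds the remainder by `C ‖ψ‖²`. The same Lipschitz bound, applied coordinatewise,
makes `φ ↦ |φ|^r φ` locally Lipschitz on `ℓ²`, so the derivative is continuous.
-/

open Asymptotics
open scoped RealInnerProductSpace

section Scalar

variable {r : ℝ}

theorem hasDerivAt_abs_rpow_mul_self (hr : 0 ≤ r) (t : ℝ) :
    HasDerivAt (fun t : ℝ => |t| ^ r * t) ((r + 1) * |t| ^ r) t := by
  rcases eq_or_ne t 0 with rfl | ht
  · have hvalue : (r + 1) * |(0 : ℝ)| ^ r = |(0 : ℝ)| ^ r := by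
      rcases eq_or_ne r 0 with rfl | hr0 <;> simp [*]
    rw [hvalue, hasDerivAt_iff_tendsto_slope]
    refine ((continuous_abs.rpow_const fun _ => Or.inr hr).tendsto 0).mono_left
      nhdsWithin_le_nhds |>.congr' ?_
    filter_upwards [self_mem_nhdsWithin] with x (hx : x ≠ 0)
    rw [slope_def_field, abs_zero, mul_zero, sub_zero, sub_zero, mul_div_cancel_right₀ _ hx]
  · have h := ((hasDerivAt_abs ht).rpow_const (p := r) (Or.inl (abs_ne_zero.2 ht))).mul
      (hasDerivAt_id t)
    refine h.congr_deriv ?_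
    have hsign : (SignType.sign t : ℝ) * t = |t| := by
      rcases ht.lt_or_gt with h | h <;> simp [h, abs_of_neg, abs_of_pos]
    have hpow : |t| ^ (r - 1) * |t| = |t| ^ r := by
      rw [← Real.rpow_add_one (abs_ne_zero.2 ht), sub_add_cancel]
    simp only [id, mul_one]
    linear_combination r * hpow + r * |t| ^ (r - 1) * hsign

theorem abs_abs_rpow_mul_self_sub_le (hr : 0 ≤ r) {R a b : ℝ} (ha : |a| ≤ R) (hb : |b| ≤ R) :
    |(|a| ^ r * a - |b| ^ r * b)| ≤ (r + 1) * R ^ r * |a - b| := by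
  have hR : 0 ≤ R := (abs_nonneg a).trans ha
  have h := (convex_Icc (-R) R).norm_image_sub_le_of_norm_hasDerivWithin_le (C := (r + 1) * R ^ r)
    (fun x _ => (hasDerivAt_abs_rpow_mul_self hr x).hasDerivWithinAt) (fun x hx => ?_)
    (abs_le.1 hb) (abs_le.1 ha)
  · simpa only [Real.norm_eq_abs] using h
  · rw [Real.norm_eq_abs, abs_of_nonneg (by positivity)]
    gcongr
    exact abs_le.2 hx

theorem abs_abs_rpow_add_two_sub_sub_le (hr : 0 ≤ r) {R a b : ℝ} (hR : |a| + |b| ≤ R) :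
    |(|a + b| ^ (r + 2) - |a| ^ (r + 2) - (r + 2) * (|a| ^ r * a) * b)|
      ≤ (r + 2) * (r + 1) * R ^ r * b ^ 2 := by
  have hR0 : 0 ≤ R := by linarith [abs_nonneg a, abs_nonneg b]
  set f : ℝ → ℝ := fun s => |a + s * b| ^ (r + 2) - (r + 2) * (|a| ^ r * a) * (s * b)
  have hf : ∀ s, HasDerivAt f
      ((r + 2) * (|a + s * b| ^ r * (a + s * b) - |a| ^ r * a) * b) s := by
    intro s
    have hline : HasDerivAt (fun s : ℝ => a + s * b) b s := (hasDerivAt_mul_const b).const_add a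
    have := ((hasDerivAt_abs_rpow (a + s * b) (p := r + 2) (by linarith)).comp s hline).sub
      (((hasDerivAt_id s).mul_const b).const_mul ((r + 2) * (|a| ^ r * a)))
    refine this.congr_deriv ?_
    rw [add_sub_cancel_right]
    ring
  have hbound : ∀ s ∈ Set.Icc (0 : ℝ) 1,
      ‖(r + 2) * (|a + s * b| ^ r * (a + s * b) - |a| ^ r * a) * b‖
        ≤ (r + 2) * (r + 1) * R ^ r * b ^ 2 := by
    intro s ⟨hs0, hs1⟩
    have hsb : |s * b| ≤ |b| := by
      rw [abs_mul, abs_of_nonneg hs0]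
      exact mul_le_of_le_one_left (abs_nonneg b) hs1
    have hlip := abs_abs_rpow_mul_self_sub_le hr (R := R) (a := a + s * b) (b := a)
      ((abs_add_le a (s * b)).trans (by linarith)) (by linarith [abs_nonneg b])
    rw [add_sub_cancel_left] at hlip
    rw [Real.norm_eq_abs, abs_mul, abs_mul, abs_of_nonneg (by linarith)]
    calc (r + 2) * |(|a + s * b| ^ r * (a + s * b) - |a| ^ r * a)| * |b|
        ≤ (r + 2) * ((r + 1) * R ^ r * |b|) * |b| := by
          gcongr
          exact hlip.trans (by gcongr)
      _ = (r + 2) * (r + 1) * R ^ r * b ^ 2 := by rw [← sq_abs b]; ring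
  have h := (convex_Icc (0 : ℝ) 1).norm_image_sub_le_of_norm_hasDerivWithin_le
    (fun s _ => (hf s).hasDerivWithinAt) hbound (Set.left_mem_Icc.2 zero_le_one)
    (Set.right_mem_Icc.2 zero_le_one)
  simp only [f, Real.norm_eq_abs, one_mul, zero_mul, add_zero, mul_zero, sub_zero, abs_one,
    mul_one] at h
  convert h using 2
  ring

end Scalar

section L2

variable {ι : Type*} {r : ℝ}

theorem lp.real_inner_eq_tsum (φ ψ : lp (fun _ : ι => ℝ) 2) : ⟪φ, ψ⟫ = ∑' n, φ n * ψ n := by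
  rw [lp.inner_eq_tsum]
  exact tsum_congr fun _ => mul_comm _ _

theorem lp.summable_apply_mul (φ ψ : lp (fun _ : ι => ℝ) 2) : Summable fun n => φ n * ψ n :=
  (lp.summable_inner φ ψ).congr fun _ => mul_comm _ _

theorem lp.norm_sq_eq_tsum_sq (φ : lp (fun _ : ι => ℝ) 2) : ‖φ‖ ^ 2 = ∑' n, φ n ^ 2 := by
  rw [← real_inner_self_eq_norm_sq, lp.real_inner_eq_tsum]
  simp only [sq]

theorem lp.abs_apply_le_norm (φ : lp (fun _ : ι => ℝ) 2) (n : ι) : |φ n| ≤ ‖φ‖ :=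
  lp.norm_apply_le_norm two_ne_zero φ n

theorem memℓp_abs_rpow_mul_self (hr : 0 ≤ r) (φ : lp (fun _ : ι => ℝ) 2) :
    Memℓp (fun n => |φ n| ^ r * φ n) 2 :=
  ((lp.memℓp φ).norm.const_mul (‖φ‖ ^ r)).mono fun n => by
    rw [Real.norm_eq_abs, abs_mul, abs_of_nonneg (by positivity), Real.norm_eq_abs]
    gcongr
    exact lp.abs_apply_le_norm φ n

def powNonlinearity (r : ℝ) (hr : 0 ≤ r) (φ : lp (fun _ : ι => ℝ) 2) : lp (fun _ : ι => ℝ) 2 :=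
  ⟨fun n => |φ n| ^ r * φ n, memℓp_abs_rpow_mul_self hr φ⟩

theorem powNonlinearity_apply (hr : 0 ≤ r) (φ : lp (fun _ : ι => ℝ) 2) (n : ι) :
    powNonlinearity r hr φ n = |φ n| ^ r * φ n := rfl

theorem norm_powNonlinearity_sub_le (hr : 0 ≤ r) {R : ℝ} {φ ψ : lp (fun _ : ι => ℝ) 2}
    (hφ : ‖φ‖ ≤ R) (hψ : ‖ψ‖ ≤ R) :
    ‖powNonlinearity r hr φ - powNonlinearity r hr ψ‖ ≤ (r + 1) * R ^ r * ‖φ - ψ‖ := by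
  have hR : 0 ≤ R := (norm_nonneg φ).trans hφ
  calc ‖powNonlinearity r hr φ - powNonlinearity r hr ψ‖
      ≤ ‖((r + 1) * R ^ r) • (φ - ψ)‖ := lp.norm_mono two_ne_zero fun n => by
        rw [lp.coeFn_smul, lp.coeFn_sub, lp.coeFn_sub, Pi.smul_apply, Pi.sub_apply, Pi.sub_apply,
          norm_smul, Real.norm_of_nonneg (by positivity : 0 ≤ (r + 1) * R ^ r)]
        exact abs_abs_rpow_mul_self_sub_le hr ((lp.abs_apply_le_norm φ n).trans hφ)
          ((lp.abs_apply_le_norm ψ n).trans hψ)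
    _ = (r + 1) * R ^ r * ‖φ - ψ‖ := by rw [norm_smul, Real.norm_of_nonneg (by positivity)]

theorem continuous_powNonlinearity (hr : 0 ≤ r) :
    Continuous (powNonlinearity (ι := ι) r hr) := by
  refine continuous_iff_continuousAt.2 fun φ => ?_
  have hball : ∀ x ∈ Metric.ball φ 1, ‖x‖ ≤ ‖φ‖ + 1 := fun x hx => by
    have := norm_le_norm_add_norm_sub' x φ
    linarith [mem_ball_iff_norm.1 hx]
  have hlip : LipschitzOnWith _ (powNonlinearity r hr) (Metric.ball φ 1) :=
    LipschitzOnWith.of_dist_le' fun x hx y hy => by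
      simpa only [dist_eq_norm] using norm_powNonlinearity_sub_le hr (hball x hx) (hball y hy)
  exact hlip.continuousOn.continuousAt (Metric.ball_mem_nhds φ one_pos)

theorem summable_abs_rpow_add_two (hr : 0 ≤ r) (φ : lp (fun _ : ι => ℝ) 2) :
    Summable fun n => |φ n| ^ (r + 2) := by
  refine (lp.summable_apply_mul (powNonlinearity r hr φ) φ).congr fun n => ?_
  rw [powNonlinearity_apply, Real.rpow_add' (abs_nonneg _) (by linarith), Real.rpow_two, sq_abs]
  ring

theorem hasFDerivAt_tsum_abs_rpow_add_two (hr : 0 ≤ r) (φ : lp (fun _ : ι => ℝ) 2) :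
    HasFDerivAt (fun x : lp (fun _ : ι => ℝ) 2 => ∑' n, |x n| ^ (r + 2))
      ((r + 2) • innerSL ℝ (powNonlinearity r hr φ)) φ := by
  rw [hasFDerivAt_iff_isLittleO_nhds_zero]
  refine IsBigO.trans_isLittleO ?_ (isLittleO_norm_pow_id one_lt_two)
  set C := (r + 2) * (r + 1) * (‖φ‖ + 1) ^ r
  refine isBigO_iff.2 ⟨C, ?_⟩
  filter_upwards [Metric.closedBall_mem_nhds (0 : lp (fun _ : ι => ℝ) 2) one_pos] with ψ hψ
  rw [mem_closedBall_zero_iff] at hψ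
  set d : ι → ℝ := fun n =>
    |φ n + ψ n| ^ (r + 2) - |φ n| ^ (r + 2) - (r + 2) * (|φ n| ^ r * φ n) * ψ n
  have hd : ∀ n, |d n| ≤ C * ψ n ^ 2 := fun n => abs_abs_rpow_add_two_sub_sub_le hr
    (by linarith [lp.abs_apply_le_norm φ n, lp.abs_apply_le_norm ψ n])
  have hsum : ∑' n, |(φ + ψ) n| ^ (r + 2) - ∑' n, |φ n| ^ (r + 2)
      - ((r + 2) • innerSL ℝ (powNonlinearity r hr φ)) ψ = ∑' n, d n := by
    rw [smul_apply, innerSL_apply_apply, lp.real_inner_eq_tsum, smul_eq_mul,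
      ← tsum_mul_left, ← (summable_abs_rpow_add_two hr _).tsum_sub (summable_abs_rpow_add_two hr _),
      ← ((summable_abs_rpow_add_two hr _).sub (summable_abs_rpow_add_two hr _)).tsum_sub
        ((lp.summable_apply_mul _ ψ).mul_left _)]
    simp only [d, lp.coeFn_add, Pi.add_apply, powNonlinearity_apply, mul_assoc]
  have hsq : Summable fun n => C * ψ n ^ 2 := by
    simpa [sq] using (lp.summable_apply_mul ψ ψ).mul_left C
  calc ‖∑' n, |(φ + ψ) n| ^ (r + 2) - ∑' n, |φ n| ^ (r + 2)
        - ((r + 2) • innerSL ℝ (powNonlinearity r hr φ)) ψ‖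
      = ‖∑' n, d n‖ := by rw [hsum]
    _ ≤ ∑' n, C * ψ n ^ 2 := tsum_of_norm_bounded hsq.hasSum hd
    _ = C * ‖‖ψ‖ ^ 2‖ := by rw [tsum_mul_left, ← lp.norm_sq_eq_tsum_sq, norm_pow, norm_norm]

end L2

section Lattice

variable {N : ℕ}

theorem norm_shiftOp (v : ZLat N) (φ : ellTwo N) : ‖shiftOp v φ‖ = ‖φ‖ := by
  have h2 : (0 : ℝ) < (2 : ℝ≥0∞).toReal := by norm_num
  rw [lp.norm_eq_tsum_rpow h2, lp.norm_eq_tsum_rpow h2]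
  congr 1
  exact (Equiv.addRight v).tsum_eq fun n => ‖φ n‖ ^ (2 : ℝ≥0∞).toReal

def shiftOpₗᵢ (v : ZLat N) : ellTwo N →ₗᵢ[ℝ] ellTwo N where
  toFun := shiftOp v
  map_add' _ _ := rfl
  map_smul' _ _ := rfl
  norm_map' := norm_shiftOp v

def fdiffL (κ : Fin N) : ellTwo N →L[ℝ] ellTwo N :=
  (shiftOpₗᵢ (evec N κ)).toContinuousLinearMap - ContinuousLinearMap.id ℝ _

theorem fdiffL_apply (κ : Fin N) (φ : ellTwo N) : fdiffL κ φ = fdiff κ φ := rfl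

variable (σ m : ℝ) (hσ : 0 ≤ σ)

def Vderiv (φ : ellTwo N) : ellTwo N →L[ℝ] ℝ :=
  -(∑ κ, (innerSL ℝ (fdiffL κ φ)).comp (fdiffL κ) + m • innerSL ℝ φ)
    + innerSL ℝ (powNonlinearity (2 * σ) (mul_nonneg zero_le_two hσ) φ)

theorem continuous_Vderiv : Continuous (Vderiv (N := N) σ m hσ) := by
  unfold Vderiv
  have := continuous_powNonlinearity (ι := ZLat N) (mul_nonneg zero_le_two hσ)
  fun_prop

theorem hasFDerivAt_Vfun (φ : ellTwo N) : HasFDerivAt (Vfun σ m) (Vderiv σ m hσ φ) φ := by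
  have hquad : HasFDerivAt (fun x => ∑ κ, ‖fdiffL κ x‖ ^ 2 + m * ‖x‖ ^ 2)
      (∑ κ, 2 • (innerSL ℝ (fdiffL κ φ)).comp (fdiffL κ) + m • 2 • innerSL ℝ φ) φ :=
    (HasFDerivAt.fun_sum fun κ _ => (fdiffL κ).hasFDerivAt.norm_sq).add
      ((hasStrictFDerivAt_norm_sq φ).hasFDerivAt.const_mul m)
  have hnonlin := hasFDerivAt_tsum_abs_rpow_add_two (mul_nonneg zero_le_two hσ) φ
  refine ((hquad.const_mul (-(1 / 2))).add (hnonlin.const_mul (1 / (2 * σ + 2)))).congr_fderiv ?_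
  ext ψ
  simp only [Vderiv, one_div, smul_add, neg_smul, add_apply, neg_apply, smul_apply, sum_apply,
    ContinuousLinearMap.comp_apply, coe_innerSL_apply, nsmul_eq_mul, Nat.cast_ofNat, smul_eq_mul]
  field_simp
  rw [← Finset.mul_sum]
  ring

theorem Vderiv_apply (φ ψ : ellTwo N) :
    Vderiv σ m hσ φ ψ =
      -((∑ κ : Fin N, ∑' n : ZLat N, fdiff κ φ n * fdiff κ ψ n) + m * ∑' n : ZLat N, φ n * ψ n)
        + ∑' n : ZLat N, |φ n| ^ (2 * σ) * φ n * ψ n := by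
  simp [Vderiv, fdiffL_apply, lp.real_inner_eq_tsum, powNonlinearity_apply]

end Lattice

theorem Vfun_c1_frechet_general (N : ℕ) (σ m : ℝ) (hσ : 0 < σ) :
    ∃ V' : ellTwo N → (ellTwo N →L[ℝ] ℝ),
      Continuous V' ∧
      (∀ φ : ellTwo N, HasFDerivAt (Vfun σ m) (V' φ) φ) ∧
      ∀ φ ψ : ellTwo N, V' φ ψ =
        -((∑ κ : Fin N, ∑' n : ZLat N, fdiff κ φ n * fdiff κ ψ n)
            + m * ∑' n : ZLat N, φ n * ψ n)
          + ∑' n : ZLat N, |φ n| ^ (2*σ) * φ n * ψ n :=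
  ⟨Vderiv σ m hσ.le, continuous_Vderiv σ m hσ.le, hasFDerivAt_Vfun σ m hσ.le,
    Vderiv_apply σ m hσ.le⟩

/-- `V` is continuously Fréchet differentiable on `ℓ²(ℤ^N)`, with
`⟨V'(φ), ψ⟩ = -(Σ_κ Σ_n (∇⁺_κ φ)_n (∇⁺_κ ψ)_n + m Σ_n φ_n ψ_n) + Σ_n |φ_n|^{2σ} φ_n ψ_n`. -/
theorem Vfun_c1_frechet (N : ℕ) (σ m : ℝ) (hσ : 0 < σ) (hm : 0 < m) :
    ∃ V' : ellTwo N → (ellTwo N →L[ℝ] ℝ),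
      Continuous V' ∧
      (∀ φ : ellTwo N, HasFDerivAt (Vfun σ m) (V' φ) φ) ∧
      ∀ φ ψ : ellTwo N, V' φ ψ =
        -((∑ κ : Fin N, ∑' n : ZLat N, fdiff κ φ n * fdiff κ ψ n)
            + m * ∑' n : ZLat N, φ n * ψ n)
          + ∑' n : ZLat N, |φ n| ^ (2*σ) * φ n * ψ n :=
  Vfun_c1_frechet_general N σ m hσ
end
end

section
/- Let c > 1, T > 0, and let μ : [0,T) → ℝ be twice differentiable with μ(t) > 0 for all t ∈ [0,T), μ′(0) > 0, and μ″(t) μ(t) ≥ c (μ′(t))² for all t ∈ [0,T). Then μ′(t)/μ(t)^c ≥ μ′(0)/μ(0)^c > 0 for all t ∈ [0,T), and necessarily T ≤ μ(0)/((c−1) μ′(0)). -/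
/-!
The quantity `μ′ / μ^c` has derivative `(μ″ μ - c μ′²) / μ^(c+1) ≥ 0`, so it never drops
below its initial value `K > 0`. Since `(μ^(1-c))′ = (1 - c) μ′ / μ^c ≤ -(c - 1) K`, the
positive function `μ^(1-c)` decreases at least linearly from `μ(0)^(1-c)`, and would vanish at
`t = μ(0) / ((c - 1) μ′(0))`; hence `T` cannot exceed this time.
-/

noncomputable section

open Set

lemma monotoneOn_of_hasDerivWithinAt_nonneg_of_convex {D : Set ℝ} (hD : Convex ℝ D)
    {f f' : ℝ → ℝ} (hf : ∀ x ∈ D, HasDerivWithinAt f (f' x) D x)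
    (hf'₀ : ∀ x ∈ interior D, 0 ≤ f' x) : MonotoneOn f D :=
  monotoneOn_of_hasDerivWithinAt_nonneg hD (fun x hx => (hf x hx).continuousWithinAt)
    (fun x hx => (hf x (interior_subset hx)).mono interior_subset) hf'₀

lemma antitoneOn_of_hasDerivWithinAt_nonpos_of_convex {D : Set ℝ} (hD : Convex ℝ D)
    {f f' : ℝ → ℝ} (hf : ∀ x ∈ D, HasDerivWithinAt f (f' x) D x)
    (hf'₀ : ∀ x ∈ interior D, f' x ≤ 0) : AntitoneOn f D :=
  antitoneOn_of_hasDerivWithinAt_nonpos hD (fun x hx => (hf x hx).continuousWithinAt)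
    (fun x hx => (hf x (interior_subset hx)).mono interior_subset) hf'₀

section Riccati

variable {s : Set ℝ} {μ μ' μ'' : ℝ → ℝ} {c t : ℝ}

lemma hasDerivWithinAt_div_rpow (hμ : 0 < μ t) (hd1 : HasDerivWithinAt μ (μ' t) s t)
    (hd2 : HasDerivWithinAt μ' (μ'' t) s t) :
    HasDerivWithinAt (fun t => μ' t / μ t ^ c)
      ((μ'' t * μ t - c * μ' t ^ 2) / μ t ^ (c + 1)) s t := by
  refine (hd2.div (hd1.rpow_const (Or.inl hμ.ne')) (Real.rpow_pos_of_pos hμ c).ne').congr_deriv ?_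
  rw [Real.rpow_sub_one hμ.ne', Real.rpow_add_one hμ.ne']
  field_simp

lemma hasDerivWithinAt_rpow_one_sub (hμ : 0 < μ t) (hd1 : HasDerivWithinAt μ (μ' t) s t) :
    HasDerivWithinAt (fun t => μ t ^ (1 - c)) ((1 - c) * (μ' t / μ t ^ c)) s t := by
  refine (hd1.rpow_const (Or.inl hμ.ne')).congr_deriv ?_
  rw [show 1 - c - 1 = -c by ring, Real.rpow_neg hμ.le]
  ring

lemma monotoneOn_div_rpow_of_riccati (hs : Convex ℝ s) (hpos : ∀ t ∈ s, 0 < μ t)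
    (hd1 : ∀ t ∈ s, HasDerivWithinAt μ (μ' t) s t)
    (hd2 : ∀ t ∈ s, HasDerivWithinAt μ' (μ'' t) s t)
    (hineq : ∀ t ∈ interior s, c * μ' t ^ 2 ≤ μ'' t * μ t) :
    MonotoneOn (fun t => μ' t / μ t ^ c) s := by
  refine monotoneOn_of_hasDerivWithinAt_nonneg_of_convex hs
    (fun t ht => hasDerivWithinAt_div_rpow (hpos t ht) (hd1 t ht) (hd2 t ht)) fun t ht => ?_
  exact div_nonneg (sub_nonneg.2 (hineq t ht))
    (Real.rpow_pos_of_pos (hpos t (interior_subset ht)) _).le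

lemma antitoneOn_rpow_one_sub_add_mul (hs : Convex ℝ s) (hc : 1 ≤ c) {K : ℝ}
    (hpos : ∀ t ∈ s, 0 < μ t) (hd1 : ∀ t ∈ s, HasDerivWithinAt μ (μ' t) s t)
    (hK : ∀ t ∈ interior s, K ≤ μ' t / μ t ^ c) :
    AntitoneOn (fun t => μ t ^ (1 - c) + (c - 1) * K * t) s := by
  refine antitoneOn_of_hasDerivWithinAt_nonpos_of_convex hs (fun t ht =>
    (hasDerivWithinAt_rpow_one_sub (hpos t ht) (hd1 t ht)).add
      ((hasDerivWithinAt_id t s).const_mul ((c - 1) * K))) fun t ht => ?_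
  have hgap := mul_le_mul_of_nonneg_left (hK t ht) (sub_nonneg.2 hc)
  linarith

end Riccati

/-- Riccati-type blow-up lemma: if `μ > 0` on `[0,T)`, `μ′(0) > 0` and
`μ″ μ ≥ c (μ′)²` with `c > 1`, then `μ′(t)/μ(t)^c ≥ μ′(0)/μ(0)^c > 0` and
`T ≤ μ(0)/((c-1) μ′(0))`. -/
theorem riccati_blow_up (c T : ℝ) (hc : 1 < c) (hT : 0 < T) (μ μ' μ'' : ℝ → ℝ)
    (hpos : ∀ t ∈ Set.Ico (0:ℝ) T, 0 < μ t)
    (hd1 : ∀ t ∈ Set.Ico (0:ℝ) T, HasDerivWithinAt μ (μ' t) (Set.Ico (0:ℝ) T) t)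
    (hd2 : ∀ t ∈ Set.Ico (0:ℝ) T, HasDerivWithinAt μ' (μ'' t) (Set.Ico (0:ℝ) T) t)
    (h0 : 0 < μ' 0)
    (hineq : ∀ t ∈ Set.Ico (0:ℝ) T, c * (μ' t) ^ 2 ≤ μ'' t * μ t) :
    (∀ t ∈ Set.Ico (0:ℝ) T, μ' 0 / μ 0 ^ c ≤ μ' t / μ t ^ c) ∧
    0 < μ' 0 / μ 0 ^ c ∧
    T ≤ μ 0 / ((c - 1) * μ' 0) := by
  have h0mem : (0:ℝ) ∈ Ico 0 T := ⟨le_rfl, hT⟩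
  have hμ0 := hpos 0 h0mem
  have hlower : ∀ t ∈ Ico (0:ℝ) T, μ' 0 / μ 0 ^ c ≤ μ' t / μ t ^ c := fun t ht =>
    monotoneOn_div_rpow_of_riccati (convex_Ico 0 T) hpos hd1 hd2
      (fun t ht => hineq t (interior_subset ht)) h0mem ht ht.1
  refine ⟨hlower, div_pos h0 (Real.rpow_pos_of_pos hμ0 c), ?_⟩
  have hanti := antitoneOn_rpow_one_sub_add_mul (convex_Ico 0 T) hc.le hpos hd1
    (fun t ht => hlower t (interior_subset ht))
  by_contra! hTB
  set B := μ 0 / ((c - 1) * μ' 0)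
  have hB : B ∈ Ico 0 T := ⟨by have := sub_pos.2 hc; positivity, hTB⟩
  have hdecay := hanti h0mem hB hB.1
  -- the linear term alone reaches `μ 0 ^ (1 - c)` at time `B`
  have hlinear : (c - 1) * (μ' 0 / μ 0 ^ c) * B = μ 0 ^ (1 - c) := by
    rw [Real.rpow_sub hμ0, Real.rpow_one]
    simp only [B]
    field_simp [(sub_pos.2 hc).ne']
  have hμB := Real.rpow_pos_of_pos (hpos B hB) (1 - c)
  simp only [mul_zero, add_zero] at hdecay
  linarith
end
end

section
/- Consider the finite one-dimensional lattice {1, …, K} with Dirichlet boundary conditions ψ₀ = ψ_{K+1} = 0, and let ε > 0, Ω > 0, λ > 0. Then the stationary equation −ε(ψ_{n−1} − 2ψ_n + ψ_{n+1}) + Ω ψ_n = λ ψ_n³ for n = 1, …, K admits a nontrivial (not identically zero) solution (ψ₁, …, ψ_K) ∈ ℝ^K. -/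
/-!
Shooting method. Read the equation as a second-order recursion
`ψ_{n+1} = 2ψ_n - ψ_{n-1} + f(ψ_n)` with `f x = (Ω x - λ x³) / ε`, started from `ψ₀ = 0`,
`ψ₁ = t`. For small `t > 0` the orbit is convex (since `f ≥ 0` on small positive values),
hence positive on `1, …, K+1`; for large `t` already `ψ₂ = 2t + f(t) < 0`. At the supremum `T`
of the parameters keeping `ψ₁, …, ψ_{K+1}` positive, all these values are `≥ 0` and one of
them vanishes. A zero at an interior site `m ≤ K` would force `ψ_{m+1} = -ψ_{m-1}`, so both
vanish and backward uniqueness gives `T = ψ₁ = 0`. Hence `ψ_{K+1} = 0` at the parameter `T > 0`.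
-/

open Filter Topology Finset

theorem exists_nonneg_and_eq_zero_of_bddAbove {ι : Type*} (s : Finset ι) (g : ι → ℝ → ℝ)
    (hg : ∀ i, Continuous (g i)) {t₀ : ℝ} (ht₀ : ∀ i ∈ s, 0 < g i t₀)
    (hbdd : BddAbove {t | ∀ i ∈ s, 0 < g i t}) :
    ∃ T, t₀ ≤ T ∧ (∀ i ∈ s, 0 ≤ g i T) ∧ ∃ i ∈ s, g i T = 0 := by
  set A := {t | ∀ i ∈ s, 0 < g i t}
  have hA : A = ⋂ i ∈ s, g i ⁻¹' Set.Ioi 0 := by ext; simp [A]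
  have hAopen : IsOpen A := hA ▸ isOpen_biInter_finset fun i _ => isOpen_Ioi.preimage (hg i)
  have hclosure : closure A ⊆ ⋂ i ∈ s, g i ⁻¹' Set.Ici 0 :=
    closure_minimal (hA ▸ Set.iInter₂_mono fun _ _ => Set.preimage_mono Set.Ioi_subset_Ici_self)
      (isClosed_biInter fun i _ => isClosed_Ici.preimage (hg i))
  have hT : sSup A ∈ closure A := csSup_mem_closure ⟨t₀, ht₀⟩ hbdd
  have hTnonneg : ∀ i ∈ s, 0 ≤ g i (sSup A) := by simpa using hclosure hT
  refine ⟨sSup A, le_csSup hbdd ht₀, hTnonneg, ?_⟩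
  by_contra! hne
  have hTA : sSup A ∈ A := fun i hi => (hTnonneg i hi).lt_of_ne (hne i hi).symm
  obtain ⟨x, hxA, hxT⟩ := ((eventually_nhdsWithin_of_eventually_nhds (hAopen.mem_nhds hTA)).and
    (self_mem_nhdsWithin (s := Set.Ioi (sSup A)))).exists
  exact (not_le.2 hxT) (le_csSup hbdd hxA)

def shootingSeq (f : ℝ → ℝ) (t : ℝ) : ℕ → ℝ
  | 0 => 0
  | 1 => t
  | n + 2 => 2 * shootingSeq f t (n + 1) - shootingSeq f t n + f (shootingSeq f t (n + 1))

section

variable {f : ℝ → ℝ} {t : ℝ}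

@[simp] theorem shootingSeq_zero : shootingSeq f t 0 = 0 := rfl

@[simp] theorem shootingSeq_one : shootingSeq f t 1 = t := rfl

theorem shootingSeq_add_two (n : ℕ) : shootingSeq f t (n + 2) =
    2 * shootingSeq f t (n + 1) - shootingSeq f t n + f (shootingSeq f t (n + 1)) := rfl

theorem shootingSeq_param_zero (hf0 : f 0 = 0) (n : ℕ) : shootingSeq f 0 n = 0 := by
  induction n using Nat.twoStepInduction with
  | zero => rfl
  | one => rfl
  | more n ih ih' => simp [shootingSeq_add_two, ih, ih', hf0]

theorem continuous_shootingSeq (hf : Continuous f) (n : ℕ) : Continuous fun t => shootingSeq f t n := by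
  induction n using Nat.twoStepInduction with
  | zero => exact continuous_const
  | one => exact continuous_id
  | more n ih ih' => simp only [shootingSeq_add_two]; fun_prop

theorem eq_zero_of_shootingSeq_eq_zero_of_succ (hf0 : f 0 = 0) {j : ℕ} (hj : shootingSeq f t j = 0)
    (hj' : shootingSeq f t (j + 1) = 0) : t = 0 := by
  induction j with
  | zero => simpa using hj'
  | succ j ih =>
    have := shootingSeq_add_two (f := f) (t := t) j
    rw [hj, hj', hf0] at this
    exact ih (by linarith) hj

theorem eq_zero_of_shootingSeq_eq_zero_of_nonneg (hf0 : f 0 = 0) {j : ℕ} (hj : 0 ≤ shootingSeq f t j)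
    (hj1 : shootingSeq f t (j + 1) = 0) (hj2 : 0 ≤ shootingSeq f t (j + 2)) : t = 0 := by
  have h := shootingSeq_add_two (f := f) (t := t) j
  rw [hj1, hf0] at h
  exact eq_zero_of_shootingSeq_eq_zero_of_succ hf0 (j := j + 1) hj1 (by linarith)

theorem mul_le_shootingSeq_and_le_sub (ht : 0 ≤ t) {N : ℕ}
    (hf : ∀ n ≤ N, 0 ≤ shootingSeq f t n → 0 ≤ f (shootingSeq f t n)) :
    ∀ n ≤ N, n * t ≤ shootingSeq f t n ∧ t ≤ shootingSeq f t (n + 1) - shootingSeq f t n := by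
  intro n hn
  induction n with
  | zero => simp
  | succ n ih =>
    obtain ⟨hle, hinc⟩ := ih (by omega)
    have hnext : (n + 1 : ℕ) * t ≤ shootingSeq f t (n + 1) := by push_cast; linarith
    have hfn := hf (n + 1) hn (le_trans (by positivity) hnext)
    refine ⟨hnext, ?_⟩
    rw [shootingSeq_add_two]
    linarith

theorem exists_shootingSeq_pos (hf : Continuous f) (hf0 : f 0 = 0)
    (hnear : ∀ᶠ x in 𝓝[≥] 0, 0 ≤ f x) (N : ℕ) :
    ∃ t, ∀ n ∈ Icc 1 N, 0 < shootingSeq f t n := by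
  rw [eventually_nhdsWithin_iff] at hnear
  have hsmall : ∀ᶠ t in 𝓝 0, ∀ n ∈ range (N + 1),
      0 ≤ shootingSeq f t n → 0 ≤ f (shootingSeq f t n) := by
    refine (eventually_all_finset _).2 fun n _ => ?_
    have := (continuous_shootingSeq hf n).tendsto 0
    rw [shootingSeq_param_zero hf0] at this
    exact this.eventually hnear
  obtain ⟨t, ht, htpos : 0 < t⟩ := ((eventually_nhdsWithin_of_eventually_nhds hsmall).and
    (self_mem_nhdsWithin (s := Set.Ioi (0 : ℝ)))).exists
  refine ⟨t, fun n hn => ?_⟩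
  obtain ⟨hn1, hnN⟩ := mem_Icc.1 hn
  have hconvex := mul_le_shootingSeq_and_le_sub htpos.le
    (fun n hn => ht n (mem_range.2 (Nat.lt_succ_of_le hn))) n hnN
  exact lt_of_lt_of_le (mul_pos (by exact_mod_cast hn1) htpos) hconvex.1

theorem bddAbove_setOf_shootingSeq_pos (hfar : ∀ᶠ x in atTop, 2 * x + f x ≤ 0) {N : ℕ} (hN : 2 ≤ N) :
    BddAbove {t | ∀ n ∈ Icc 1 N, 0 < shootingSeq f t n} := by
  obtain ⟨R, hR⟩ := eventually_atTop.1 hfar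
  refine ⟨R, fun t ht => ?_⟩
  by_contra! hlt
  have h2 := ht 2 (mem_Icc.2 ⟨by norm_num, hN⟩)
  have := hR t hlt.le
  simp only [shootingSeq_add_two, zero_add, shootingSeq_one, shootingSeq_zero, sub_zero] at h2
  linarith

theorem exists_pos_shootingSeq_eq_zero (hf : Continuous f) (hf0 : f 0 = 0)
    (hnear : ∀ᶠ x in 𝓝[≥] 0, 0 ≤ f x) (hfar : ∀ᶠ x in atTop, 2 * x + f x ≤ 0)
    {K : ℕ} (hK : 1 ≤ K) : ∃ T, 0 < T ∧ shootingSeq f T (K + 1) = 0 := by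
  obtain ⟨t₀, ht₀⟩ := exists_shootingSeq_pos hf hf0 hnear (K + 1)
  obtain ⟨T, hT, hnonneg, m, hm, hmT⟩ := exists_nonneg_and_eq_zero_of_bddAbove (Icc 1 (K + 1))
    (fun n t => shootingSeq f t n) (continuous_shootingSeq hf) ht₀ (bddAbove_setOf_shootingSeq_pos hfar (by omega))
  have hT0 : 0 < T := lt_of_lt_of_le (by simpa using ht₀ 1 (by simp)) hT
  have hnonneg' : ∀ n ≤ K + 1, 0 ≤ shootingSeq f T n := fun n hn => by
    rcases n with _ | n
    · rfl
    · exact hnonneg _ (mem_Icc.2 ⟨by omega, hn⟩)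
  obtain ⟨hm1, hmK⟩ := mem_Icc.1 hm
  obtain rfl | hlt := eq_or_lt_of_le hmK
  · exact ⟨T, hT0, hmT⟩
  obtain ⟨j, rfl⟩ : ∃ j, m = j + 1 := ⟨m - 1, by omega⟩
  exact absurd (eq_zero_of_shootingSeq_eq_zero_of_nonneg hf0 (hnonneg' j (by omega)) hmT
    (hnonneg' (j + 2) (by omega))) hT0.ne'

end

section

variable {ε Ω lam : ℝ}

theorem eventually_nonneg_cubic (hε : 0 < ε) (hΩ : 0 < Ω) :
    ∀ᶠ x in 𝓝[≥] 0, 0 ≤ (Ω * x - lam * x ^ 3) / ε := by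
  have hlin : ∀ᶠ x in 𝓝 (0 : ℝ), 0 < Ω - lam * x ^ 2 :=
    ((by fun_prop : Continuous fun x : ℝ => Ω - lam * x ^ 2).tendsto' 0 Ω (by simp)).eventually
      (eventually_gt_nhds hΩ)
  filter_upwards [eventually_nhdsWithin_of_eventually_nhds hlin, self_mem_nhdsWithin]
    with x hx (hx0 : 0 ≤ x)
  rw [show Ω * x - lam * x ^ 3 = x * (Ω - lam * x ^ 2) by ring]
  positivity

theorem eventually_two_mul_add_cubic_nonpos (hε : 0 < ε) (hlam : 0 < lam) :
    ∀ᶠ x in atTop, 2 * x + (Ω * x - lam * x ^ 3) / ε ≤ 0 := by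
  filter_upwards [eventually_ge_atTop 1, eventually_ge_atTop ((2 * ε + Ω) / lam)] with x hx1 hx
  have hcubic : 0 ≤ lam * x ^ 2 - (2 * ε + Ω) := by
    rw [div_le_iff₀ hlam] at hx
    nlinarith [mul_le_mul_of_nonneg_left hx1 (mul_nonneg hlam.le (by linarith : (0 : ℝ) ≤ x))]
  rw [show 2 * x + (Ω * x - lam * x ^ 3) / ε = -(x * (lam * x ^ 2 - (2 * ε + Ω)) / ε) by
    field_simp; ring]
  exact neg_nonpos.2 (div_nonneg (mul_nonneg (by linarith) hcubic) hε.le)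

end

/-- Existence of a nontrivial solution of the stationary equation
`-ε(ψ_{n-1} - 2ψ_n + ψ_{n+1}) + Ω ψ_n = λ ψ_n³` on the finite lattice `{1, …, K}`
with Dirichlet boundary conditions `ψ₀ = ψ_{K+1} = 0`. -/
theorem finite_lattice_nontrivial_stationary_solution (K : ℕ) (hK : 1 ≤ K)
    (ε Ω lam : ℝ) (hε : 0 < ε) (hΩ : 0 < Ω) (hlam : 0 < lam) :
    ∃ ψ : ℤ → ℝ, ψ 0 = 0 ∧ ψ (K + 1) = 0 ∧
      (∀ n : ℤ, 1 ≤ n → n ≤ K →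
        -ε * (ψ (n - 1) - 2 * ψ n + ψ (n + 1)) + Ω * ψ n = lam * ψ n ^ 3) ∧
      ∃ n : ℤ, 1 ≤ n ∧ n ≤ K ∧ ψ n ≠ 0 := by
  set f : ℝ → ℝ := fun x => (Ω * x - lam * x ^ 3) / ε
  obtain ⟨T, hT0, hTK⟩ :=
    exists_pos_shootingSeq_eq_zero (by fun_prop) (by simp) (eventually_nonneg_cubic hε hΩ)
      (eventually_two_mul_add_cubic_nonpos hε hlam) hK
  refine ⟨fun n => shootingSeq f T n.toNat, rfl, by simpa using hTK, fun n hn1 hnK => ?_,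
    1, le_rfl, by exact_mod_cast hK, by simpa using hT0.ne'⟩
  obtain ⟨j, rfl⟩ : ∃ j : ℕ, n = j + 1 := ⟨(n - 1).toNat, by omega⟩
  have e1 : ((j : ℤ) + 1 - 1).toNat = j := by omega
  have e2 : ((j : ℤ) + 1).toNat = j + 1 := by omega
  have e3 : ((j : ℤ) + 1 + 1).toNat = j + 2 := by omega
  simp only [e1, e2, e3, shootingSeq_add_two]
  generalize shootingSeq f T j = a, shootingSeq f T (j + 1) = b
  simp only [f]
  field_simp
  ring
end

section
/- Let ε > 0, Ω > 0, λ > 0, and suppose ψ ∈ ℓ²(ℤ) satisfies −ε(ψ_{n−1} − 2ψ_n + ψ_{n+1}) + Ω ψ_n = λ ψ_n³ for all n ∈ ℤ. If Σ_{n∈ℤ} ψ_n² < Ω/(3λ), then ψ_n = 0 for all n; that is, there exists no nontrivial forced solution of power less than P_min(Ω, λ) = Ω/(3λ). -/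
/-!
Multiply the equation by `ψ n` and sum over `n`. Summation by parts turns the discrete Laplacian
into `ε Σ (ψ (n + 1) - ψ n)² = 2ε (P - Σ ψ n ψ (n + 1)) ≥ 0`, where `P = Σ ψ n²`, so
`Ω P ≤ λ Σ ψ n⁴`. Since every `ψ n²` is at most `P`, also `Σ ψ n⁴ ≤ P²`, whence
`P (Ω - λ P) ≤ 0`. The power bound gives `λ P < Ω`, forcing `P = 0`.
-/

section Summability

variable {ι : Type*} {f g : ι → ℝ}

theorem Memℓp.summable_sq (hf : Memℓp f 2) : Summable (f · ^ 2) := by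
  simpa [Real.rpow_two] using hf.summable (p := 2) (by norm_num)

theorem summable_mul_of_summable_sq (hf : Summable (f · ^ 2)) (hg : Summable (g · ^ 2)) :
    Summable fun i ↦ f i * g i :=
  ((hf.add hg).div_const 2).of_norm_bounded fun i ↦ by
    rw [Real.norm_eq_abs, abs_mul, le_div_iff₀ two_pos, ← sq_abs (f i), ← sq_abs (g i)]
    nlinarith [two_mul_le_add_sq |f i| |g i|]

theorem tsum_mul_le_of_summable_sq (hf : Summable (f · ^ 2)) (hg : Summable (g · ^ 2)) :
    ∑' i, f i * g i ≤ (∑' i, f i ^ 2 + ∑' i, g i ^ 2) / 2 := by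
  rw [← hf.tsum_add hg, ← tsum_div_const]
  refine (summable_mul_of_summable_sq hf hg).tsum_le_tsum (fun i ↦ ?_) ((hf.add hg).div_const 2)
  linarith [two_mul_le_add_sq (f i) (g i)]

theorem sq_le_tsum_sq (hf : Summable (f · ^ 2)) (i : ι) : f i ^ 2 ≤ ∑' j, f j ^ 2 :=
  hf.le_tsum i fun j _ ↦ sq_nonneg (f j)

theorem pow_four_le_tsum_sq_mul_sq (hf : Summable (f · ^ 2)) (i : ι) :
    f i ^ 4 ≤ (∑' j, f j ^ 2) * f i ^ 2 := by
  rw [show f i ^ 4 = f i ^ 2 * f i ^ 2 by ring]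
  exact mul_le_mul_of_nonneg_right (sq_le_tsum_sq hf i) (sq_nonneg _)

theorem summable_pow_four (hf : Summable (f · ^ 2)) : Summable (f · ^ 4) :=
  (hf.mul_left _).of_nonneg_of_le (fun i ↦ by positivity) (pow_four_le_tsum_sq_mul_sq hf)

theorem tsum_pow_four_le_sq_tsum_sq (hf : Summable (f · ^ 2)) :
    ∑' i, f i ^ 4 ≤ (∑' i, f i ^ 2) ^ 2 := by
  rw [sq, ← tsum_mul_left]
  exact (summable_pow_four hf).tsum_le_tsum (pow_four_le_tsum_sq_mul_sq hf) (hf.mul_left _)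

end Summability

section Lattice

variable {ψ : ℤ → ℝ}

theorem summable_sq_comp_add_one (hψ : Summable (ψ · ^ 2)) : Summable fun n ↦ ψ (n + 1) ^ 2 :=
  (Equiv.addRight (1 : ℤ)).summable_iff.2 hψ

theorem tsum_mul_succ_le_tsum_sq (hψ : Summable (ψ · ^ 2)) :
    ∑' n, ψ n * ψ (n + 1) ≤ ∑' n, ψ n ^ 2 := by
  have hshift : ∑' n, ψ (n + 1) ^ 2 = ∑' n, ψ n ^ 2 :=
    (Equiv.addRight (1 : ℤ)).tsum_eq (ψ · ^ 2)
  linarith [tsum_mul_le_of_summable_sq hψ (summable_sq_comp_add_one hψ)]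

theorem hasSum_mul_neg_laplacian (hψ : Summable (ψ · ^ 2)) :
    HasSum (fun n ↦ ψ n * -(ψ (n - 1) - 2 * ψ n + ψ (n + 1)))
      (2 * (∑' n, ψ n ^ 2 - ∑' n, ψ n * ψ (n + 1))) := by
  have hright := (summable_mul_of_summable_sq hψ (summable_sq_comp_add_one hψ)).hasSum
  have hleft : HasSum (fun n ↦ ψ n * ψ (n - 1)) (∑' n, ψ n * ψ (n + 1)) := by
    rw [← (Equiv.subRight (1 : ℤ)).hasSum_iff] at hright
    convert hright using 2 with n
    simp [mul_comm]
  have h := ((hψ.hasSum.mul_left 2).sub hleft).sub hright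
  rw [show 2 * (∑' n, ψ n ^ 2 - ∑' n, ψ n * ψ (n + 1)) =
    2 * ∑' n, ψ n ^ 2 - ∑' n, ψ n * ψ (n + 1) - ∑' n, ψ n * ψ (n + 1) by ring]
  exact h.congr_fun fun n ↦ by ring

theorem mul_tsum_sq_le_tsum_pow_four {ε Ω lam : ℝ} (hε : 0 ≤ ε) (hψ : Summable (ψ · ^ 2))
    (heq : ∀ n, -ε * (ψ (n - 1) - 2 * ψ n + ψ (n + 1)) + Ω * ψ n = lam * ψ n ^ 3) :
    Ω * ∑' n, ψ n ^ 2 ≤ lam * ∑' n, ψ n ^ 4 := by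
  have henergy := ((hasSum_mul_neg_laplacian hψ).mul_left ε).add (hψ.hasSum.mul_left Ω)
  have hQ := (summable_pow_four hψ).hasSum.mul_left lam
  have hident := henergy.unique (hQ.congr_fun fun n ↦ by linear_combination ψ n * heq n)
  have hkinetic := mul_nonneg hε (sub_nonneg.2 (tsum_mul_succ_le_tsum_sq hψ))
  linarith

theorem eq_zero_of_mul_tsum_sq_lt {ε Ω lam : ℝ} (hε : 0 ≤ ε) (hlam : 0 ≤ lam)
    (hψ : Summable (ψ · ^ 2))
    (heq : ∀ n, -ε * (ψ (n - 1) - 2 * ψ n + ψ (n + 1)) + Ω * ψ n = lam * ψ n ^ 3)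
    (hpow : lam * ∑' n, ψ n ^ 2 < Ω) (n : ℤ) : ψ n = 0 := by
  set P := ∑' n, ψ n ^ 2
  have hP : P * (Ω - lam * P) ≤ 0 := by
    have := mul_le_mul_of_nonneg_left (tsum_pow_four_le_sq_tsum_sq hψ) hlam
    linarith [mul_tsum_sq_le_tsum_pow_four hε hψ heq]
  have hP0 : P ≤ 0 := nonpos_of_mul_nonpos_left hP (sub_pos.2 hpow)
  exact sq_eq_zero_iff.1 (le_antisymm ((sq_le_tsum_sq hψ n).trans hP0) (sq_nonneg _))

end Lattice

theorem lattice_forced_solution_threshold_general (ε Ω lam : ℝ)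
    (hε : 0 < ε) (hlam : 0 < lam)
    (ψ : ℤ → ℝ) (hψ : Memℓp ψ 2)
    (heq : ∀ n : ℤ,
      -ε * (ψ (n - 1) - 2 * ψ n + ψ (n + 1)) + Ω * ψ n = lam * ψ n ^ 3)
    (hpow : ∑' n : ℤ, ψ n ^ 2 < Ω / (3 * lam)) :
    ∀ n : ℤ, ψ n = 0 := by
  have hP : 0 ≤ ∑' n : ℤ, ψ n ^ 2 := tsum_nonneg fun n ↦ sq_nonneg (ψ n)
  have hlamP : lam * ∑' n : ℤ, ψ n ^ 2 < Ω := by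
    rw [lt_div_iff₀ (by positivity)] at hpow
    nlinarith
  exact eq_zero_of_mul_tsum_sq_lt hε.le hlam.le hψ.summable_sq heq hlamP

/-- Excitation threshold for forced solutions on the infinite one-dimensional lattice:
if `ψ ∈ ℓ²(ℤ)` solves `-ε(ψ_{n-1} - 2ψ_n + ψ_{n+1}) + Ω ψ_n = λ ψ_n³` and its power
satisfies `Σ_n ψ_n² < Ω/(3λ)`, then `ψ ≡ 0`. -/
theorem lattice_forced_solution_threshold (ε Ω lam : ℝ)
    (hε : 0 < ε) (hΩ : 0 < Ω) (hlam : 0 < lam)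
    (ψ : ℤ → ℝ) (hψ : Memℓp ψ 2)
    (heq : ∀ n : ℤ,
      -ε * (ψ (n - 1) - 2 * ψ n + ψ (n + 1)) + Ω * ψ n = lam * ψ n ^ 3)
    (hpow : ∑' n : ℤ, ψ n ^ 2 < Ω / (3 * lam)) :
    ∀ n : ℤ, ψ n = 0 :=
  lattice_forced_solution_threshold_general ε Ω lam hε hlam ψ hψ heq hpow
end

section
/- Let m > 0, σ > 0, and suppose φ ∈ ℓ²(ℤ^N) satisfies the equilibrium equation −(Δ_d φ)_n + m φ_n = |φ_n|^{2σ} φ_n for all n ∈ ℤ^N. If Σ_{n∈ℤ^N} φ_n² < (m/(2σ+1))^{1/σ}, then φ_n = 0 for all n; that is, there exists no nontrivial equilibrium of the DKG equation of power less than P_min(m, σ) = (m/(2σ+1))^{1/σ}. -/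
noncomputable section

open scoped ENNReal InnerProductSpace

/-- Excitation threshold for equilibria of the DKG equation: if `φ ∈ ℓ²(ℤ^N)` solves
`-(Δ_d φ)_n + m φ_n = |φ_n|^{2σ} φ_n` and its power satisfies
`Σ_n φ_n² < (m/(2σ+1))^{1/σ}`, then `φ ≡ 0`. -/
theorem dkg_equilibrium_threshold (N : ℕ) (m σ : ℝ) (hm : 0 < m) (hσ : 0 < σ)
    (φ : ellTwo N)
    (heq : ∀ n : ZLat N, -(discLap φ) n + m * φ n = |φ n| ^ (2*σ) * φ n)
    (hpow : ∑' n : ZLat N, φ n ^ 2 < (m / (2*σ+1)) ^ (1/σ)) :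
    ∀ n : ZLat N, φ n = 0 := by
  intro n0
  by_contra hn0
  -- summability of squares
  have hsum : Summable (fun n : ZLat N => φ n ^ 2) := by
    have h2 : (0:ℝ) < (2 : ℝ≥0∞).toReal := by norm_num
    have h := (memℓp_gen_iff h2).mp (lp.memℓp φ)
    have : ∀ n : ZLat N, ‖φ n‖ ^ (2:ℝ≥0∞).toReal = φ n ^ 2 := by
      intro n
      rw [show ((2:ℝ≥0∞).toReal) = ((2:ℕ):ℝ) by norm_num, Real.rpow_natCast]
      simp [sq_abs]
    simpa [this] using h
  have h0 : (0:ℝ) < φ n0 ^ 2 := by positivity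
  -- find a maximizer
  have hfin : {n : ZLat N | φ n0 ^ 2 ≤ φ n ^ 2}.Finite := by
    have := hsum.tendsto_cofinite_zero
    have hev := this.eventually (eventually_lt_nhds h0)
    rw [Filter.eventually_cofinite] at hev
    exact hev.subset (by intro n hn; simp only [Set.mem_setOf_eq, not_lt] at *; exact hn)
  obtain ⟨n1, hn1mem, hn1max⟩ := hfin.toFinset.exists_max_image (fun n => φ n ^ 2)
    ⟨n0, by simp [hfin.mem_toFinset]⟩
  have hle : ∀ n, φ n ^ 2 ≤ φ n1 ^ 2 := by
    intro n
    by_cases h : φ n0 ^ 2 ≤ φ n ^ 2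
    · exact hn1max n (by simpa [hfin.mem_toFinset] using h)
    · have := hn1max n0 (by simp [hfin.mem_toFinset])
      linarith [not_le.mp h]
  have h1 : (0:ℝ) < φ n1 ^ 2 := lt_of_lt_of_le h0 (hle n0)
  -- |φ n1|^(2σ) < m
  have htsum : φ n1 ^ 2 ≤ ∑' n, φ n ^ 2 :=
    Summable.le_tsum hsum n1 (fun _ _ => sq_nonneg _)
  have hA : |φ n1| ^ (2*σ) < m := by
    have e1 : |φ n1| ^ (2*σ) = (φ n1 ^ 2) ^ σ := by
      rw [Real.rpow_mul (abs_nonneg _)]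
      norm_num
    have hbase : (0:ℝ) ≤ m / (2*σ+1) := by positivity
    have e2 : ((m / (2*σ+1)) ^ (1/σ)) ^ σ = m / (2*σ+1) := by
      rw [← Real.rpow_mul hbase, one_div, inv_mul_cancel₀ hσ.ne', Real.rpow_one]
    have hlt : (φ n1 ^ 2) ^ σ < m / (2*σ+1) := by
      calc (φ n1 ^ 2) ^ σ ≤ (∑' n, φ n ^ 2) ^ σ :=
            Real.rpow_le_rpow (sq_nonneg _) htsum hσ.le
        _ < ((m / (2*σ+1)) ^ (1/σ)) ^ σ :=
            Real.rpow_lt_rpow (tsum_nonneg fun _ => sq_nonneg _) hpow hσ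
        _ = m / (2*σ+1) := e2
    have : m / (2*σ+1) < m := by
      rw [div_lt_iff₀ (by linarith)]
      nlinarith
    linarith [e1 ▸ hlt]
  -- coordinate formula for discLap
  have hΔ : (discLap φ) n1
      = (∑ κ : Fin N, (φ (n1 + evec N κ) + φ (n1 + -(evec N κ)))) - 2*N*φ n1 := by
    simp only [discLap, lp.coeFn_sub, lp.coeFn_smul, Pi.sub_apply, Pi.smul_apply,
      lp.coeFn_sum, Finset.sum_apply]
    rw [smul_eq_mul]
    congr 1
  -- pointwise estimate
  have hbound : ∀ v : ZLat N, φ (n1 + v) * φ n1 ≤ φ n1 ^ 2 := by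
    intro v
    nlinarith [sq_nonneg (φ (n1 + v) - φ n1), hle (n1 + v)]
  have hΔφ : (discLap φ) n1 * φ n1 ≤ 0 := by
    rw [hΔ, sub_mul, Finset.sum_mul]
    have : ∑ κ : Fin N, (φ (n1 + evec N κ) + φ (n1 + -(evec N κ))) * φ n1
        ≤ ∑ κ : Fin N, 2 * φ n1 ^ 2 := by
      refine Finset.sum_le_sum fun κ _ => ?_
      have := hbound (evec N κ)
      have := hbound (-(evec N κ))
      nlinarith [hbound (evec N κ), hbound (-(evec N κ))]
    simp only [Finset.sum_const, Finset.card_univ, Fintype.card_fin, nsmul_eq_mul] at this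
    nlinarith [this]
  -- conclude
  have := heq n1
  have hId : (-(discLap φ) n1 + m * φ n1) * φ n1 = |φ n1| ^ (2*σ) * φ n1 * φ n1 := by
    rw [this]
  have hr : |φ n1| ^ (2*σ) * φ n1 * φ n1 < m * (φ n1 ^ 2) := by
    have : |φ n1| ^ (2*σ) * φ n1 * φ n1 = |φ n1| ^ (2*σ) * φ n1 ^ 2 := by ring
    rw [this]
    exact mul_lt_mul_of_pos_right hA h1
  nlinarith [hΔφ, hId, hr]
end
end
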